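/- arXiv:1207.3266 — 7 statements merged into one kernel-verified Lean document; each statement's English description precedes it below -/
import Mathlib

section
/- For all integers m ≥ 1 and n ≥ 1, F^k_{m+n} = F^k_m · F^k_n + Σ_{i=2}^{k} Σ_{j=1}^{i−1} F^k_{m−j} · F^k_{n−i+j}, where k ≥ 2 is an integer and F^k of a negative index is 0. -/
/-!
Write `T n r = F (n-1) + ⋯ + F (n-r)` (`trailingSum`), so that the recurrence reads
`F n = T n k`. The key identity is `F (m + n) = ∑_{j=0}^{k} F (m - j) · T n (k - j)` for `m ≥ 0`, `n ≥ 1`. For `n = 1`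
it is the recurrence at `m + 1`, since `T 1 r = F 0 = 1` for `r ≥ 1`; and its right-hand side
is unchanged under `(m, n) ↦ (m + 1, n - 1)`, because `T (n+1) (r+1) = F n + T n r`. The
double sum of the theorem, summed over `i` first, is this expansion without its `j = 0` term
`F m · T n k = F m · F n`.
-/

open Finset

variable {R : Type*} [CommSemiring R]

theorem sum_Icc_one_eq_sum_range {M : Type*} [AddCommMonoid M] (f : ℕ → M) (r : ℕ) :
    ∑ i ∈ Icc 1 r, f i = ∑ t ∈ range r, f (t + 1) := by
  rw [← Ico_add_one_right_eq_Icc, sum_Ico_eq_sum_range, Nat.add_sub_cancel]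
  simp only [add_comm]

structure IsKFibonacci (k : ℕ) (F : ℤ → R) : Prop where
  zero : F 0 = 1
  neg : ∀ n : ℤ, n < 0 → F n = 0
  recurrence : ∀ n : ℤ, 1 ≤ n → F n = ∑ i ∈ Icc 1 k, F (n - i)

def trailingSum (F : ℤ → R) (n : ℤ) (r : ℕ) : R :=
  ∑ t ∈ range r, F (n - 1 - t)

section trailingSum

variable (F : ℤ → R)

@[simp]
theorem trailingSum_zero (n : ℤ) : trailingSum F n 0 = 0 :=
  sum_range_zero _

theorem trailingSum_succ_succ (n : ℤ) (r : ℕ) :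
    trailingSum F (n + 1) (r + 1) = F n + trailingSum F n r := by
  rw [trailingSum, sum_range_succ', add_comm]
  push_cast
  congr 1
  · simp
  · exact sum_congr rfl fun t _ ↦ by ring_nf

theorem sum_range_eq_trailingSum (m : ℤ) (r : ℕ) :
    ∑ j ∈ range r, F (m - j) = trailingSum F (m + 1) r := by
  simp only [trailingSum, add_sub_cancel_right]

theorem trailingSum_of_nonpos {n : ℤ} (hn : n ≤ 0) (hF : ∀ n : ℤ, n < 0 → F n = 0) (r : ℕ) :
    trailingSum F n r = 0 :=
  sum_eq_zero fun t _ ↦ hF _ (by omega)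

end trailingSum

namespace IsKFibonacci

variable {k : ℕ} {F : ℤ → R}

theorem eq_trailingSum (hF : IsKFibonacci k F) {n : ℤ} (hn : 1 ≤ n) :
    F n = trailingSum F n k := by
  rw [hF.recurrence n hn, sum_Icc_one_eq_sum_range, trailingSum]
  exact sum_congr rfl fun t _ ↦ by push_cast; ring_nf

theorem trailingSum_one (hF : IsKFibonacci k F) {r : ℕ} (hr : 1 ≤ r) :
    trailingSum F 1 r = 1 := by
  obtain ⟨r, rfl⟩ := Nat.exists_eq_add_of_le' hr
  rw [show (1 : ℤ) = 0 + 1 by simp, trailingSum_succ_succ, trailingSum_of_nonpos F le_rfl hF.neg, hF.zero,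
    add_zero]

end IsKFibonacci

def addExpansion (F : ℤ → R) (k : ℕ) (m n : ℤ) : R :=
  ∑ j ∈ range (k + 1), F (m - j) * trailingSum F n (k - j)

namespace IsKFibonacci

variable {k : ℕ} {F : ℤ → R}

theorem addExpansion_one (hF : IsKFibonacci k F) {m : ℤ} (hm : 0 ≤ m) :
    addExpansion F k m 1 = F (m + 1) := by
  have hT : ∀ j ∈ range k, F (m - j) * trailingSum F 1 (k - j) = F (m - j) := fun j hj ↦ by
    rw [hF.trailingSum_one (by simp at hj; omega), mul_one]
  rw [addExpansion, sum_range_succ, Nat.sub_self, trailingSum_zero, mul_zero, add_zero,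
    sum_congr rfl hT, sum_range_eq_trailingSum, ← hF.eq_trailingSum (by omega)]

theorem addExpansion_add_one_left (hF : IsKFibonacci k F) {m n : ℤ} (hm : 0 ≤ m) (hn : 1 ≤ n) :
    addExpansion F k (m + 1) n = addExpansion F k m (n + 1) := by
  have hT : ∀ j ∈ range k, F (m - j) * trailingSum F (n + 1) (k - j) =
      F (m - j) * F n + F (m - j) * trailingSum F n (k - (j + 1)) := fun j hj ↦ by
    rw [show k - j = k - (j + 1) + 1 by simp at hj; omega, trailingSum_succ_succ, mul_add]
  rw [addExpansion, addExpansion, sum_range_succ', sum_range_succ, Nat.sub_self,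
    trailingSum_zero, mul_zero, add_zero, sum_congr rfl hT, sum_add_distrib, ← sum_mul,
    sum_range_eq_trailingSum, ← hF.eq_trailingSum (by omega)]
  push_cast
  simp only [add_sub_add_right_eq_sub, sub_zero, Nat.sub_zero, ← hF.eq_trailingSum hn]
  ring

theorem eq_addExpansion (hF : IsKFibonacci k F) {m n : ℤ} (hm : 0 ≤ m) (hn : 1 ≤ n) :
    F (m + n) = addExpansion F k m n := by
  induction n, hn using Int.leInduction generalizing m with
  | base => rw [hF.addExpansion_one hm]
  | succ n hn ih =>
    rw [← add_assoc, add_right_comm, ih (by omega), hF.addExpansion_add_one_left hm hn]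

end IsKFibonacci

theorem addExpansion_eq (F : ℤ → R) (k : ℕ) (m n : ℤ) :
    addExpansion F k m n =
      F m * trailingSum F n k + ∑ j ∈ Icc 1 k, F (m - j) * trailingSum F n (k - j) := by
  rw [addExpansion, sum_range_succ', sum_Icc_one_eq_sum_range, add_comm]
  simp

theorem sum_Icc_sum_Icc_eq_sum_trailingSum (F : ℤ → R) (k : ℕ) (m n : ℤ) :
    ∑ i ∈ Icc 2 k, ∑ j ∈ Icc 1 (i - 1), F (m - (j : ℤ)) * F (n - (i : ℤ) + (j : ℤ)) =
      ∑ j ∈ Icc 1 k, F (m - j) * trailingSum F n (k - j) := by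
  rw [sum_comm' (t' := Icc 1 k) (s' := fun j ↦ Icc (j + 1) k) (fun i j ↦ by simp only [mem_Icc]; omega)]
  refine sum_congr rfl fun j _ ↦ ?_
  rw [← mul_sum, ← Ico_add_one_right_eq_Icc, sum_Ico_eq_sum_range, Nat.add_sub_add_right,
    trailingSum]
  congr 1
  exact sum_congr rfl fun t _ ↦ by push_cast; ring_nf

theorem kFib_addition_formula_general (k : ℕ) (F : ℤ → ℤ)
    (hF0 : F 0 = 1) (hFneg : ∀ n : ℤ, n < 0 → F n = 0)
    (hFrec : ∀ n : ℤ, 1 ≤ n → F n = ∑ i ∈ Finset.Icc 1 k, F (n - i))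
    (m n : ℤ) (hm : 1 ≤ m) (hn : 1 ≤ n) :
    F (m + n) = F m * F n +
      ∑ i ∈ Finset.Icc 2 k, ∑ j ∈ Finset.Icc 1 (i - 1),
        F (m - (j : ℤ)) * F (n - (i : ℤ) + (j : ℤ)) := by
  have hF : IsKFibonacci k F := ⟨hF0, hFneg, hFrec⟩
  rw [hF.eq_addExpansion (by omega) hn, addExpansion_eq, ← hF.eq_trailingSum hn,
    sum_Icc_sum_Icc_eq_sum_trailingSum]

/-- For all integers `m ≥ 1` and `n ≥ 1`, with `k ≥ 2` and `F = F^k`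
the `k`-Fibonacci function (`F 0 = 1`, `F` vanishes on negatives, and
`F n = F (n-1) + ⋯ + F (n-k)` for `n ≥ 1`):
`F (m+n) = F m · F n + Σ_{i=2}^{k} Σ_{j=1}^{i-1} F (m-j) · F (n-i+j)`. -/
theorem kFib_addition_formula (k : ℕ) (hk : 2 ≤ k) (F : ℤ → ℤ)
    (hF0 : F 0 = 1) (hFneg : ∀ n : ℤ, n < 0 → F n = 0)
    (hFrec : ∀ n : ℤ, 1 ≤ n → F n = ∑ i ∈ Finset.Icc 1 k, F (n - i))
    (m n : ℤ) (hm : 1 ≤ m) (hn : 1 ≤ n) :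
    F (m + n) = F m * F n +
      ∑ i ∈ Finset.Icc 2 k, ∑ j ∈ Finset.Icc 1 (i - 1),
        F (m - (j : ℤ)) * F (n - (i : ℤ) + (j : ℤ)) :=
  kFib_addition_formula_general k F hF0 hFneg hFrec m n hm hn
end

section
/- For all integers k ≥ 2 and n ≥ 1, F^k_n = F^{k−1}_n + Σ_{j=0}^{n−k} F^{k−1}_j · F^k_{n−k−j}, where the sum is empty if n < k. -/
/-- For all integers `k ≥ 2` and `n ≥ 1`,
`F^k_n = F^{k-1}_n + Σ_{j=0}^{n-k} F^{k-1}_j · F^k_{n-k-j}` (the sum is empty if `n < k`),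
where `Fk = F^k` and `Fk1 = F^{k-1}` are the `k`- and `(k-1)`-Fibonacci functions. -/
theorem kFib_remove_largest_tile (k : ℕ) (hk : 2 ≤ k) (Fk Fk1 : ℤ → ℤ)
    (hFk0 : Fk 0 = 1) (hFkneg : ∀ n : ℤ, n < 0 → Fk n = 0)
    (hFkrec : ∀ n : ℤ, 1 ≤ n → Fk n = ∑ i ∈ Finset.Icc 1 k, Fk (n - i))
    (hFk10 : Fk1 0 = 1) (hFk1neg : ∀ n : ℤ, n < 0 → Fk1 n = 0)
    (hFk1rec : ∀ n : ℤ, 1 ≤ n → Fk1 n = ∑ i ∈ Finset.Icc 1 (k - 1), Fk1 (n - i))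
    (n : ℕ) (hn : 1 ≤ n) :
    Fk n = Fk1 n +
      ∑ j ∈ Finset.range (n + 1 - k), Fk1 j * Fk ((n : ℤ) - k - j) := by
  -- The key claim, over all integers, with the sum written as an integer `Icc` sum.
  have key : ∀ N : ℕ, ∀ m : ℤ, m ≤ N →
      Fk m = Fk1 m + ∑ j ∈ Finset.Icc (0:ℤ) (m - k), Fk1 j * Fk (m - k - j) := by
    have base : ∀ m : ℤ, m ≤ 0 →
        Fk m = Fk1 m + ∑ j ∈ Finset.Icc (0:ℤ) (m - k), Fk1 j * Fk (m - k - j) := by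
      intro m hm
      have he : Finset.Icc (0:ℤ) (m - k) = ∅ := Finset.Icc_eq_empty (by omega)
      rw [he, Finset.sum_empty, add_zero]
      rcases eq_or_lt_of_le hm with h | h
      · rw [h, hFk0, hFk10]
      · rw [hFkneg m h, hFk1neg m h]
    intro N
    induction N with
    | zero => intro m hm; exact base m (by exact_mod_cast hm)
    | succ N ih =>
      intro m hm
      by_cases hmN : m ≤ N
      · exact ih m hmN
      have hm1 : 1 ≤ m := by omega
      -- split the recurrence, peeling off the `i = k` term
      have hsplit : ∑ i ∈ Finset.Icc 1 k, Fk (m - i)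
          = (∑ i ∈ Finset.Icc 1 (k-1), Fk (m - i)) + Fk (m - k) := by
        conv_lhs => rw [show k = (k-1)+1 by omega]
        rw [Finset.sum_Icc_succ_top (by omega), show k - 1 + 1 = k by omega]
      -- apply the inductive hypothesis to each term of the sum
      have hterm : ∀ i ∈ Finset.Icc 1 (k-1),
          Fk (m - i) = Fk1 (m - i)
            + ∑ j ∈ Finset.Icc (0:ℤ) (m - i - k), Fk1 j * Fk (m - i - k - j) := by
        intro i hi
        simp only [Finset.mem_Icc] at hi
        exact ih (m - i) (by omega)
      have hmain : Fk m = (∑ i ∈ Finset.Icc 1 (k-1), Fk1 (m - i))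
          + (∑ i ∈ Finset.Icc 1 (k-1),
              ∑ j ∈ Finset.Icc (0:ℤ) (m - i - k), Fk1 j * Fk (m - i - k - j))
          + Fk (m - k) := by
        rw [hFkrec m hm1, hsplit, Finset.sum_congr rfl hterm, Finset.sum_add_distrib]
      rw [hmain, hFk1rec m hm1]
      -- remaining goal: double sum + Fk (m-k) = Fk1 m's companion sum
      rcases lt_or_ge m (k : ℤ) with hmk | hmk
      · -- everything is zero
        have h1 : ∀ i ∈ Finset.Icc 1 (k-1),
            (∑ j ∈ Finset.Icc (0:ℤ) (m - i - k), Fk1 j * Fk (m - i - k - j)) = 0 := by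
          intro i hi
          simp only [Finset.mem_Icc] at hi
          rw [Finset.Icc_eq_empty (by omega), Finset.sum_empty]
        rw [Finset.sum_congr rfl h1, Finset.sum_const_zero,
          Finset.Icc_eq_empty (show ¬ (0:ℤ) ≤ m - k by omega), Finset.sum_empty,
          hFkneg (m - k) (by omega)]
        ring
      · -- m ≥ k : peel off the `j = 0` term of the RHS sum
        have h0 : Finset.Icc (0:ℤ) (m - k) = insert 0 (Finset.Icc 1 (m - k)) := by
          ext x
          simp only [Finset.mem_Icc, Finset.mem_insert]
          omega
        rw [h0, Finset.sum_insert (by simp), hFk10]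
        -- expand Fk1 j in the remaining sum
        have hexp : ∀ j ∈ Finset.Icc (1:ℤ) (m - k),
            Fk1 j * Fk (m - k - j)
              = ∑ i ∈ Finset.Icc 1 (k-1), Fk1 (j - i) * Fk (m - k - j) := by
          intro j hj
          simp only [Finset.mem_Icc] at hj
          rw [hFk1rec j hj.1, Finset.sum_mul]
        rw [Finset.sum_congr rfl hexp, Finset.sum_comm]
        -- for each i, reindex j ↦ j + i and drop the vanishing negative terms
        have hinner : ∀ i ∈ Finset.Icc 1 (k-1),
            (∑ j ∈ Finset.Icc (1:ℤ) (m - k), Fk1 (j - i) * Fk (m - k - j))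
              = ∑ j ∈ Finset.Icc (0:ℤ) (m - i - k), Fk1 j * Fk (m - i - k - j) := by
          intro i hi
          simp only [Finset.mem_Icc] at hi
          have hmap : Finset.Icc (1:ℤ) (m - k)
              = Finset.map (addRightEmbedding (i:ℤ)) (Finset.Icc (1 - i) (m - k - i)) := by
            rw [Finset.map_add_right_Icc]
            congr 1 <;> ring
          rw [hmap, Finset.sum_map]
          have hcong : ∀ x ∈ Finset.Icc (1 - (i:ℤ)) (m - k - i),
              Fk1 (addRightEmbedding (i:ℤ) x - i) * Fk (m - k - addRightEmbedding (i:ℤ) x)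
                = Fk1 x * Fk (m - i - k - x) := by
            intro x hx
            simp only [addRightEmbedding_apply]
            congr 1
            · congr 1; ring
            · congr 1; ring
          rw [Finset.sum_congr rfl hcong,
            show m - (k:ℤ) - i = m - i - k from by ring]
          refine (Finset.sum_subset (Finset.Icc_subset_Icc_left (by omega)) ?_).symm
          intro x hx hnx
          simp only [Finset.mem_Icc] at hx hnx
          have : x < 0 := by omega
          rw [hFk1neg x this, zero_mul]
        rw [Finset.sum_congr rfl hinner]
        simp only [sub_zero, one_mul]
        ring
  have hkey := key n n le_rfl
  rw [hkey]
  congr 1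
  -- convert the `Icc` sum over ℤ to the `range` sum over ℕ
  rcases le_or_gt k n with h | h
  · refine (Finset.sum_bij' (fun (j : ℤ) _ => j.toNat) (fun (j : ℕ) _ => (j : ℤ))
      ?_ ?_ ?_ ?_ ?_)
    · intro a ha
      simp only [Finset.mem_Icc] at ha
      simp only [Finset.mem_range]
      omega
    · intro a ha
      simp only [Finset.mem_range] at ha
      simp only [Finset.mem_Icc]
      omega
    · intro a ha
      simp only [Finset.mem_Icc] at ha
      simp [Int.toNat_of_nonneg ha.1]
    · intro a ha
      simp
    · intro a ha
      simp only [Finset.mem_Icc] at ha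
      simp [Int.toNat_of_nonneg ha.1]
  · rw [show n + 1 - k = 0 by omega, Finset.range_zero, Finset.sum_empty,
      Finset.Icc_eq_empty (show ¬ (0:ℤ) ≤ (n:ℤ) - k by omega), Finset.sum_empty]
end

section
/- For all integers k ≥ 2 and n ≥ 1, S_k(n, 0, 0) = S_{k−1}(n, 0, 0) + Σ_{j=0}^{n−k} w(k, j+1, n−k−j) · S_{k−1}(j, 0, n−j) · S_k(n−k−j, k+j, 0), where the sum is empty if n < k. -/
/-! A tiling by tiles of length at most `k` either contains no tile of length `k`, or splits
uniquely at its first tile of length `k` into a tiling of the first `j` cells by tiles of length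
at most `k - 1`, that tile, and a tiling of the last `n - k - j` cells by tiles of length at
most `k`. Since the weight of a tile only depends on its length and position, the weight of the
tiling factors accordingly. -/

/-- The weighted sum `S_K(n,a,b)` over all compositions of `n` with parts in `{1,…,K}`:
each composition `c = (c_1,…,c_m)` with partial sums `p_0 = 0`, `p_j = c_1 + ⋯ + c_j`
contributes `∏_{j=1}^m w(c_j, a + p_{j-1} + 1, b + n - p_j)`. -/
def weightedSum {R : Type*} [CommRing R] (w : ℕ → ℕ → ℕ → R) (K n a b : ℕ) : R :=
  ∑ c ∈ Finset.univ.filter (fun c : Composition n => ∀ i ∈ c.blocks, i ≤ K),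
    ∏ j ∈ Finset.range c.length,
      w (c.blocks.getD j 0) (a + c.sizeUpTo j + 1) (b + n - c.sizeUpTo (j + 1))

theorem List.append_cons_cancel_of_notMem {α : Type*} {x₁ x₂ z₁ z₂ : List α} {a : α}
    (h₁ : a ∉ x₁) (h₂ : a ∉ x₂) (h : x₁ ++ a :: z₁ = x₂ ++ a :: z₂) : x₁ = x₂ ∧ z₁ = z₂ := by
  rw [List.append_eq_append_iff] at h
  rcases h with ⟨c, rfl, hc⟩ | ⟨c, rfl, hc⟩ <;> cases c <;> simp_all

namespace Composition

def spliceBlock {m p n : ℕ} (c₁ : Composition m) (k : ℕ) (hk : 0 < k) (c₂ : Composition p)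
    (h : m + k + p = n) : Composition n :=
  ((c₁.append (single k hk)).append c₂).cast h

@[simp]
theorem spliceBlock_blocks {m p n : ℕ} (c₁ : Composition m) (k : ℕ) (hk : 0 < k)
    (c₂ : Composition p) (h : m + k + p = n) :
    (c₁.spliceBlock k hk c₂ h).blocks = c₁.blocks ++ k :: c₂.blocks := by
  simp [spliceBlock]

end Composition

open Finset

def boundedCompositions (K n : ℕ) : Finset (Composition n) :=
  univ.filter fun c => ∀ i ∈ c.blocks, i ≤ K

theorem mem_boundedCompositions {K n : ℕ} {c : Composition n} :
    c ∈ boundedCompositions K n ↔ ∀ i ∈ c.blocks, i ≤ K := by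
  simp [boundedCompositions]

theorem boundedCompositions_mono {K L : ℕ} (h : K ≤ L) (n : ℕ) :
    boundedCompositions K n ⊆ boundedCompositions L n := fun _ hc =>
  mem_boundedCompositions.2 fun i hi => (mem_boundedCompositions.1 hc i hi).trans h

theorem notMem_blocks_of_mem_boundedCompositions_pred {k n : ℕ} (hk : 0 < k)
    {c : Composition n} (hc : c ∈ boundedCompositions (k - 1) n) : k ∉ c.blocks := fun h => by
  have := mem_boundedCompositions.1 hc k h
  omega

theorem mem_boundedCompositions_sdiff_pred {k n : ℕ} {c : Composition n} :
    c ∈ boundedCompositions k n \ boundedCompositions (k - 1) n ↔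
      (∀ i ∈ c.blocks, i ≤ k) ∧ k ∈ c.blocks := by
  simp only [mem_sdiff, mem_boundedCompositions, not_forall, exists_prop, and_congr_right_iff]
  refine fun hle => ⟨fun ⟨i, hi, hik⟩ => ?_, fun hk => ⟨k, hk, ?_⟩⟩
  · obtain rfl : i = k := by have := hle i hi; omega
    exact hi
  · have := c.one_le_blocks hk
    omega

theorem sum_boundedCompositions_sdiff {β : Type*} [AddCommMonoid β] {k : ℕ} (hk : 0 < k)
    (n : ℕ) (f : List ℕ → β) :
    ∑ c ∈ boundedCompositions k n \ boundedCompositions (k - 1) n, f c.blocks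
      = ∑ x ∈ (range (n + 1 - k)).sigma
          (fun j => boundedCompositions (k - 1) j ×ˢ boundedCompositions k (n - k - j)),
          f (x.2.1.blocks ++ k :: x.2.2.blocks) := by
  symm
  refine sum_bij (fun x hx => x.2.1.spliceBlock k hk x.2.2 ?_) ?_ ?_ ?_ (fun _ _ => by simp)
  · have := mem_range.1 (mem_sigma.1 hx).1
    omega
  · rintro ⟨j, c₁, c₂⟩ hx
    simp only [mem_sigma, mem_product, mem_boundedCompositions] at hx
    simp only [mem_boundedCompositions_sdiff_pred, Composition.spliceBlock_blocks,
      List.mem_append, List.mem_cons, true_or, or_true, and_true]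
    rintro i (hi | rfl | hi)
    · have := hx.2.1 i hi
      omega
    · exact le_rfl
    · exact hx.2.2 i hi
  · rintro ⟨j, c₁, c₂⟩ hx ⟨j', c₁', c₂'⟩ hx' h
    obtain ⟨h₁, h₂⟩ := List.append_cons_cancel_of_notMem
      (notMem_blocks_of_mem_boundedCompositions_pred hk (mem_product.1 (mem_sigma.1 hx).2).1)
      (notMem_blocks_of_mem_boundedCompositions_pred hk (mem_product.1 (mem_sigma.1 hx').2).1)
      (by simpa using congrArg Composition.blocks h)
    obtain rfl : j = j' := by rw [← c₁.blocks_sum, ← c₁'.blocks_sum, h₁]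
    obtain rfl := Composition.ext h₁
    obtain rfl := Composition.ext h₂
    rfl
  · intro c hc
    obtain ⟨hle, hk⟩ := mem_boundedCompositions_sdiff_pred.1 hc
    obtain ⟨x, z, hxz, hx⟩ := List.eq_append_cons_of_mem hk
    have hsum := c.blocks_sum
    simp only [hxz, List.sum_append, List.sum_cons] at hsum hle
    refine ⟨⟨x.sum, ⟨x, fun hi => c.blocks_pos (by simp [hxz, hi]), rfl⟩,
      ⟨z, fun hi => c.blocks_pos (by simp [hxz, hi]), by omega⟩⟩, ?_, Composition.ext ?_⟩
    · simp only [mem_sigma, mem_range, mem_product, mem_boundedCompositions]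
      refine ⟨by omega, fun i hi => ?_, fun i hi => hle i (by simp [hi])⟩
      have : i ≠ k := by rintro rfl; exact hx hi
      have := hle i (by simp [hi])
      omega
    · simp [hxz]

section Weight

variable {R : Type*} [CommRing R] (w : ℕ → ℕ → ℕ → R)

/-- The weight of the tiling by the tiles of `l` (in order) of a board segment preceded by `a`
cells and followed by `b` cells. -/
def blocksWeight : ℕ → ℕ → List ℕ → R
  | _, _, [] => 1
  | a, b, i :: l => w i (a + 1) (b + l.sum) * blocksWeight (a + i) b l

theorem blocksWeight_append (a b : ℕ) (l₁ l₂ : List ℕ) :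
    blocksWeight w a b (l₁ ++ l₂)
      = blocksWeight w a (b + l₂.sum) l₁ * blocksWeight w (a + l₁.sum) b l₂ := by
  induction l₁ generalizing a with
  | nil => simp [blocksWeight]
  | cons i l ih =>
    simp only [List.cons_append, blocksWeight, ih, List.sum_append, List.sum_cons, mul_assoc]
    rw [add_comm l.sum, ← add_assoc b, add_assoc a]

theorem prod_range_length_eq_blocksWeight (a b : ℕ) (l : List ℕ) :
    ∏ j ∈ range l.length,
        w (l.getD j 0) (a + (l.take j).sum + 1) (b + l.sum - (l.take (j + 1)).sum)
      = blocksWeight w a b l := by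
  induction l generalizing a with
  | nil => simp [blocksWeight]
  | cons i l ih =>
    rw [List.length_cons, prod_range_succ', mul_comm]
    simp only [blocksWeight, List.getD_cons_succ, List.getD_cons_zero, List.take_succ_cons,
      List.take_zero, List.sum_cons, List.sum_nil]
    rw [← ih]
    congr 1
    · congr 1
      omega
    · refine prod_congr rfl fun j _ => ?_
      congr 1 <;> omega

theorem weightedSum_eq_sum_blocksWeight (K n a b : ℕ) :
    weightedSum w K n a b = ∑ c ∈ boundedCompositions K n, blocksWeight w a b c.blocks := by
  refine sum_congr rfl fun c _ => ?_
  rw [← prod_range_length_eq_blocksWeight, c.blocks_sum]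
  rfl

theorem blocksWeight_splice {k n j : ℕ} (hj : j + k ≤ n) {l₁ l₂ : List ℕ} (h₁ : l₁.sum = j)
    (h₂ : l₂.sum = n - k - j) :
    blocksWeight w 0 0 (l₁ ++ k :: l₂)
      = w k (j + 1) (n - k - j) * (blocksWeight w 0 (n - j) l₁ * blocksWeight w (k + j) 0 l₂) := by
  have hkl₂ : k + l₂.sum = n - j := by omega
  rw [blocksWeight_append, List.sum_cons, blocksWeight, hkl₂, h₁, h₂]
  simp only [zero_add, add_comm j k]
  ring

end Weight

theorem weightedSum_remove_largest_tile_general {R : Type*} [CommRing R] (w : ℕ → ℕ → ℕ → R)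
    (k : ℕ) (hk : 2 ≤ k) (n : ℕ) :
    weightedSum w k n 0 0
      = weightedSum w (k - 1) n 0 0 +
        ∑ j ∈ Finset.range (n + 1 - k),
          w k (j + 1) (n - k - j) * weightedSum w (k - 1) j 0 (n - j) *
            weightedSum w k (n - k - j) (k + j) 0 := by
  simp only [weightedSum_eq_sum_blocksWeight]
  rw [← sum_sdiff (boundedCompositions_mono (Nat.sub_le k 1) n), add_comm,
    sum_boundedCompositions_sdiff (by omega : 0 < k), sum_sigma]
  refine congrArg _ (sum_congr rfl fun j hj => ?_)
  rw [sum_product, mul_assoc, sum_mul_sum, mul_sum]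
  refine sum_congr rfl fun c₁ _ => ?_
  rw [mul_sum]
  refine sum_congr rfl fun c₂ _ => ?_
  have := mem_range.1 hj
  exact blocksWeight_splice w (by omega) c₁.blocks_sum c₂.blocks_sum

/-- For all integers `k ≥ 2` and `n ≥ 1`,
`S_k(n,0,0) = S_{k-1}(n,0,0)
  + Σ_{j=0}^{n-k} w(k, j+1, n-k-j) · S_{k-1}(j, 0, n-j) · S_k(n-k-j, k+j, 0)`,
where the sum is empty if `n < k`. -/
theorem weightedSum_remove_largest_tile {R : Type*} [CommRing R] (w : ℕ → ℕ → ℕ → R)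
    (k : ℕ) (hk : 2 ≤ k) (n : ℕ) (hn : 1 ≤ n) :
    weightedSum w k n 0 0
      = weightedSum w (k - 1) n 0 0 +
        ∑ j ∈ Finset.range (n + 1 - k),
          w k (j + 1) (n - k - j) * weightedSum w (k - 1) j 0 (n - j) *
            weightedSum w k (n - k - j) (k + j) 0 :=
  weightedSum_remove_largest_tile_general w k hk n
end

section
/- Let k ≥ 1 and n ≥ 1 be integers and let A be the k×k integer matrix with rows and columns indexed by 0,…,k−1 whose (i,j) entry is F^k_{n+k−1+j−i} (so the first row is F^k_{n+k−1}, F^k_{n+k}, …, F^k_{n+2k−2} and the last row is F^k_n, F^k_{n+1}, …, F^k_{n+k−1}). Then det A = 1 if k is odd, and det A = (−1)^{n−1} if k is even. -/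
/-!
Let `T m` be the `k × k` Toeplitz matrix `(F (m + j - i))ᵢⱼ`, so the matrix of the theorem is
`T (n + k - 1)`. The recurrence says exactly that `T (m + 1) = T m * C` for the companion matrix `C`
of `X^k - X^(k-1) - ⋯ - 1`, whose determinant is `(-1)^(k-1)`, while `T 0` is unitriangular
because `F 0 = 1` and `F` vanishes on negative integers. Hence `det T m = (-1)^((k-1) m)`, and the
theorem is the parity of `(k - 1) (n + k - 1)`.
-/

open Matrix Finset

namespace KFib

variable {R : Type*} [CommRing R]

def toeplitz (F : ℤ → R) (k : ℕ) (m : ℤ) : Matrix (Fin k) (Fin k) R :=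
  of fun i j => F (m + j - i)

/-- Right multiplication by this matrix shifts the columns one step to the left and puts the sum of
all columns in the last place. -/
def companion (R : Type*) [CommRing R] (k : ℕ) : Matrix (Fin k) (Fin k) R :=
  of fun i j => if (j : ℕ) + 1 = k then 1 else if (i : ℕ) = j + 1 then 1 else 0

theorem det_companion (k : ℕ) : (companion R k).det = (-1) ^ (k - 1) := by
  cases k with
  | zero => simp
  | succ k =>
    have h_row_zero (j : Fin (k + 1)) :
        companion R (k + 1) 0 j = if j = Fin.last k then 1 else 0 := by
      simp only [companion, of_apply, Fin.ext_iff, Fin.val_zero, Fin.val_last]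
      split_ifs <;> simp_all
    have h_minor : (companion R (k + 1)).submatrix Fin.succ Fin.castSucc = 1 := by
      ext i j
      simp only [companion, submatrix_apply, of_apply, one_apply, Fin.val_castSucc, Fin.val_succ,
        Fin.ext_iff]
      have := j.isLt
      split_ifs <;> first | rfl | omega
    rw [det_succ_row_zero, sum_eq_single (Fin.last k) (by simp_all) (by simp)]
    simp [h_row_zero, h_minor]

theorem toeplitz_mul_companion {F : ℤ → R} {k : ℕ}
    (hFrec : ∀ n : ℤ, 1 ≤ n → F n = ∑ i ∈ Icc 1 k, F (n - i)) {m : ℤ} (hm : 0 ≤ m) :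
    toeplitz F k m * companion R k = toeplitz F k (m + 1) := by
  ext i j
  simp only [toeplitz, companion, mul_apply, of_apply, mul_ite, mul_one, mul_zero]
  by_cases hj : (j : ℕ) + 1 = k
  · simp only [if_pos hj]
    have h_sum : ∑ t ∈ Icc 1 k, F (m + k - i - t) = ∑ l ∈ range k, F (m + l - i) := by
      rw [← Ico_add_one_right_eq_Icc, sum_Ico_eq_sum_range, Nat.add_sub_cancel,
        ← sum_range_reflect (fun l : ℕ => F (m + l - i))]
      refine sum_congr rfl fun l hl => congrArg F ?_
      have := mem_range.1 hl
      push_cast [Nat.cast_sub (by omega : l ≤ k - 1), Nat.cast_sub (by omega : 1 ≤ k)]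
      ring
    rw [Fin.sum_univ_eq_sum_range (fun l => F (m + l - i)), ← h_sum, ← hFrec _ (by omega)]
    congr 1
    omega
  · simp only [if_neg hj]
    rw [Fintype.sum_eq_single ⟨j + 1, by omega⟩ fun l hl => if_neg fun h => hl (Fin.ext h)]
    simp only [if_true]
    congr 1
    push_cast
    ring

theorem det_toeplitz_zero {F : ℤ → R} (hF0 : F 0 = 1) (hFneg : ∀ n : ℤ, n < 0 → F n = 0)
    (k : ℕ) : (toeplitz F k 0).det = 1 := by
  have h_upper : (toeplitz F k 0).IsUpperTriangular := fun i j (hji : j < i) =>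
    hFneg _ (by simp only [zero_add, sub_neg, Nat.cast_lt, Fin.val_fin_lt]; exact hji)
  rw [det_of_isUpperTriangular h_upper]
  exact prod_eq_one fun i _ => by simp [toeplitz, hF0]

theorem det_toeplitz_natCast {F : ℤ → R} {k : ℕ} (hF0 : F 0 = 1)
    (hFneg : ∀ n : ℤ, n < 0 → F n = 0)
    (hFrec : ∀ n : ℤ, 1 ≤ n → F n = ∑ i ∈ Icc 1 k, F (n - i)) (m : ℕ) :
    (toeplitz F k m).det = (-1) ^ ((k - 1) * m) := by
  induction m with
  | zero => simpa using det_toeplitz_zero hF0 hFneg k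
  | succ m ih =>
    rw [Nat.cast_succ, ← toeplitz_mul_companion hFrec (Nat.cast_nonneg m), det_mul, ih,
      det_companion, ← pow_add, mul_add_one]

end KFib

theorem neg_one_pow_pred_mul_add_pred {R : Type*} [Monoid R] [HasDistribNeg R] {k n : ℕ}
    (hk : 1 ≤ k) (hn : 1 ≤ n) :
    (-1 : R) ^ ((k - 1) * (n + k - 1)) = if Odd k then 1 else (-1) ^ (n - 1) := by
  obtain ⟨k, rfl⟩ : ∃ k', k = k' + 1 := ⟨k - 1, by omega⟩
  obtain ⟨n, rfl⟩ : ∃ n', n = n' + 1 := ⟨n - 1, by omega⟩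
  rw [Nat.add_sub_cancel, Nat.add_sub_cancel]
  rcases Nat.even_or_odd k with hk | hk
  · rw [if_pos hk.add_one, (hk.mul_right _).neg_one_pow]
  · rw [if_neg (Nat.not_odd_iff_even.2 hk.add_one), pow_mul, hk.neg_one_pow,
      show n + 1 + (k + 1) - 1 = n + (k + 1) by omega, pow_add, hk.add_one.neg_one_pow, mul_one]

/-- Let `k ≥ 1` and `n ≥ 1` and let `A` be the `k × k` integer matrix
whose `(i,j)` entry is `F^k_{n+k-1+j-i}` (rows and columns indexed by `0,…,k-1`).
Then `det A = 1` if `k` is odd and `det A = (-1)^{n-1}` if `k` is even, where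
`F = F^k` is the `k`-Fibonacci function. -/
theorem kFib_toeplitz_determinant (k : ℕ) (hk : 1 ≤ k) (F : ℤ → ℤ)
    (hF0 : F 0 = 1) (hFneg : ∀ n : ℤ, n < 0 → F n = 0)
    (hFrec : ∀ n : ℤ, 1 ≤ n → F n = ∑ i ∈ Finset.Icc 1 k, F (n - i))
    (n : ℕ) (hn : 1 ≤ n) :
    Matrix.det (Matrix.of fun i j : Fin k =>
        F ((n : ℤ) + (k : ℤ) - 1 + (j : ℤ) - (i : ℤ)))
      = if Odd k then 1 else (-1) ^ (n - 1) := by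
  have h_toeplitz : (of fun i j : Fin k => F ((n : ℤ) + (k : ℤ) - 1 + (j : ℤ) - (i : ℤ)))
      = KFib.toeplitz F k ((n + k - 1 : ℕ) : ℤ) := by
    rw [Nat.cast_sub (by omega)]
    rfl
  rw [h_toeplitz, KFib.det_toeplitz_natCast hF0 hFneg hFrec,
    neg_one_pow_pred_mul_add_pred hk hn]
end

section
/- For every composition c = (c_1,…,c_m) of n with parts in {1,…,k}, the partially reversed layered permutation τ_c satisfies inv(τ_c) = Σ_{j=1}^{m} [ C(c_j − 1, 2) + c_j · (n − p_j) ], where C(i,2) = i(i−1)/2. -/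
/-- The partially reversed layered permutation `τ_c` associated to a composition `c`
of `n` (as a function on `{1,…,n}`, identity off that range): if `p_{j-1} < x < p_j`
then `τ_c(x) = n - x`, and `τ_c(p_j) = n - p_{j-1}`, where `p_j` are the partial
sums of `c`. -/
def prLayeredPerm {n : ℕ} (c : Composition n) (x : ℕ) : ℕ :=
  if h : 1 ≤ x ∧ x ≤ n then
    let i := c.index ⟨x - 1, by omega⟩
    if x = c.sizeUpTo ((i : ℕ) + 1) then n - c.sizeUpTo i else n - x
  else x

/-- The number of inversions of a function `f` on `{1,…,n}`: the number of pairs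
`(x,y)` with `1 ≤ x < y ≤ n` and `f x > f y`. -/
def invStat (n : ℕ) (f : ℕ → ℕ) : ℕ :=
  ((Finset.Icc 1 n ×ˢ Finset.Icc 1 n).filter
    (fun p => p.1 < p.2 ∧ f p.2 < f p.1)).card

/-! A position `x` in the layer `(p_{j-1}, p_j]` is in inversion with every later position
except `p_j`, which carries the largest value of that layer. Hence `x` contributes
`(n - p_j) + (p_j - x - 1)` inversions, and summing over the layer gives
`c_j (n - p_j) + C(c_j - 1, 2)`. -/

open Finset

lemma Finset.sum_Ioc_eq_sum_range_sum_Ioc {M : Type*} [AddCommMonoid M] {s : ℕ → ℕ}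
    (hs : Monotone s) (f : ℕ → M) (m : ℕ) :
    ∑ x ∈ Ioc (s 0) (s m), f x = ∑ j ∈ range m, ∑ x ∈ Ioc (s j) (s (j + 1)), f x := by
  induction m with
  | zero => simp
  | succ m ih =>
    rw [sum_range_succ, ← ih, sum_Ioc_consecutive _ (hs m.zero_le) (hs m.le_succ)]

lemma Nat.card_Ioc_erase_of_le {x b n : ℕ} (hxb : x ≤ b) (hbn : b ≤ n) :
    #((Ioc x n).erase b) = (n - b) + (b - x - 1) := by
  rcases hxb.lt_or_eq with hlt | rfl
  · rw [card_erase_of_mem (mem_Ioc.2 ⟨hlt, hbn⟩), Nat.card_Ioc]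
    omega
  · rw [erase_eq_of_notMem (by simp), Nat.card_Ioc]
    omega

lemma Nat.sum_Ioc_sub_sub_one (a b : ℕ) :
    ∑ x ∈ Ioc a b, (b - x - 1) = (b - a - 1).choose 2 := by
  induction h : b - a generalizing a with
  | zero => simp [Ioc_eq_empty_of_le (by omega : b ≤ a)]
  | succ d ih =>
    rw [← sum_Ioc_consecutive _ (Nat.le_succ a) (by omega : a + 1 ≤ b), Nat.Ioc_succ_singleton,
      sum_singleton, ih (a + 1) (by omega)]
    rw [show b - (a + 1) - 1 = d - 1 by omega, Nat.add_sub_cancel]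
    cases d with
    | zero => rfl
    | succ d => rw [Nat.add_sub_cancel, Nat.choose_succ_succ' d 1, Nat.choose_one_right]

namespace Composition

variable {n : ℕ} (c : Composition n)

lemma index_eq_of_sizeUpTo_le_of_lt {j : Fin n} {i : ℕ} (h₁ : c.sizeUpTo i ≤ j)
    (h₂ : (j : ℕ) < c.sizeUpTo (i + 1)) : (c.index j : ℕ) = i := by
  have h₃ := c.lt_sizeUpTo_index_succ j
  rw [Fin.val_succ] at h₃
  have := c.monotone_sizeUpTo.reflect_lt (h₁.trans_lt h₃)
  have := c.monotone_sizeUpTo.reflect_lt ((c.sizeUpTo_index_le j).trans_lt h₂)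
  omega

lemma exists_mem_Ioc_sizeUpTo {x : ℕ} (hx : x ∈ Icc 1 n) :
    ∃ i, x ∈ Ioc (c.sizeUpTo i) (c.sizeUpTo (i + 1)) := by
  rw [mem_Icc] at hx
  have h₁ := c.sizeUpTo_index_le ⟨x - 1, by omega⟩
  have h₂ := c.lt_sizeUpTo_index_succ ⟨x - 1, by omega⟩
  simp only [Fin.val_succ] at h₁ h₂
  exact ⟨c.index ⟨x - 1, by omega⟩, mem_Ioc.2 ⟨by omega, by omega⟩⟩

lemma getD_blocks (j : ℕ) : c.blocks.getD j 0 = c.sizeUpTo (j + 1) - c.sizeUpTo j := by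
  rcases lt_or_ge j c.length with h | h
  · rw [c.sizeUpTo_succ h, List.getD_eq_getElem _ _ (by simpa using h)]
    omega
  · rw [List.getD_eq_default _ _ (by simpa using h), c.sizeUpTo_ofLength_le _ h,
      c.sizeUpTo_ofLength_le _ (by omega), Nat.sub_self]

lemma sum_Icc_eq_sum_sum_Ioc_sizeUpTo {M : Type*} [AddCommMonoid M] (f : ℕ → M) :
    ∑ x ∈ Icc 1 n, f x =
      ∑ j ∈ range c.length, ∑ x ∈ Ioc (c.sizeUpTo j) (c.sizeUpTo (j + 1)), f x := by
  rw [← sum_Ioc_eq_sum_range_sum_Ioc c.monotone_sizeUpTo, sizeUpTo_zero, sizeUpTo_length,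
    ← Icc_add_one_left_eq_Ioc, zero_add]

end Composition

section

variable {n : ℕ} {c : Composition n}

lemma prLayeredPerm_of_mem_Ioc {j x : ℕ} (hx : x ∈ Ioc (c.sizeUpTo j) (c.sizeUpTo (j + 1))) :
    prLayeredPerm c x =
      if x = c.sizeUpTo (j + 1) then n - c.sizeUpTo j else n - x := by
  rw [mem_Ioc] at hx
  have hxn := c.sizeUpTo_le (j + 1)
  have hj : (c.index ⟨x - 1, by omega⟩ : ℕ) = j :=
    c.index_eq_of_sizeUpTo_le_of_lt (show _ ≤ x - 1 by omega) (show x - 1 < _ by omega)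
  rw [prLayeredPerm, dif_pos ⟨by omega, hxn.trans' hx.2⟩]
  simp only [hj]

lemma prLayeredPerm_lt_iff {j x y : ℕ} (hx : x ∈ Ioc (c.sizeUpTo j) (c.sizeUpTo (j + 1)))
    (hxy : x < y) (hyn : y ≤ n) :
    prLayeredPerm c y < prLayeredPerm c x ↔ y ≠ c.sizeUpTo (j + 1) := by
  obtain ⟨i, hy⟩ := c.exists_mem_Ioc_sizeUpTo (mem_Icc.2 ⟨by omega, hyn⟩)
  rw [prLayeredPerm_of_mem_Ioc hx, prLayeredPerm_of_mem_Ioc hy]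
  rw [mem_Ioc] at hx hy
  have hji : j < i + 1 := c.monotone_sizeUpTo.reflect_lt (by omega)
  have hin := c.sizeUpTo_le (i + 1)
  rcases (Nat.lt_succ_iff.1 hji).lt_or_eq with hlt | rfl
  · have := c.monotone_sizeUpTo (show j + 1 ≤ i from hlt)
    split_ifs <;> omega
  · split_ifs <;> omega

lemma filter_Ioc_prLayeredPerm_lt {j x : ℕ}
    (hx : x ∈ Ioc (c.sizeUpTo j) (c.sizeUpTo (j + 1))) :
    {y ∈ Ioc x n | prLayeredPerm c y < prLayeredPerm c x} =
      (Ioc x n).erase (c.sizeUpTo (j + 1)) := by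
  ext y
  rw [mem_filter, mem_erase, mem_Ioc, and_comm (a := y ≠ _)]
  exact and_congr_right fun ⟨hxy, hyn⟩ => prLayeredPerm_lt_iff hx hxy hyn

end

lemma invStat_eq_sum_card (n : ℕ) (f : ℕ → ℕ) :
    invStat n f = ∑ x ∈ Icc 1 n, #{y ∈ Ioc x n | f y < f x} := by
  rw [invStat, card_filter, sum_product]
  refine sum_congr rfl fun x hx => ?_
  rw [← card_filter]
  congr 1
  ext y
  simp only [mem_filter, mem_Icc, mem_Ioc] at hx ⊢
  omega

theorem inv_prLayeredPerm_general (n : ℕ) (c : Composition n) :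
    invStat n (prLayeredPerm c)
      = ∑ j ∈ Finset.range c.length,
          (Nat.choose (c.blocks.getD j 0 - 1) 2 +
            c.blocks.getD j 0 * (n - c.sizeUpTo (j + 1))) := by
  rw [invStat_eq_sum_card, c.sum_Icc_eq_sum_sum_Ioc_sizeUpTo]
  refine sum_congr rfl fun j _ => ?_
  set a := c.sizeUpTo j
  set b := c.sizeUpTo (j + 1)
  have hbn : b ≤ n := c.sizeUpTo_le _
  calc ∑ x ∈ Ioc a b, #{y ∈ Ioc x n | prLayeredPerm c y < prLayeredPerm c x}
      = ∑ x ∈ Ioc a b, ((n - b) + (b - x - 1)) := sum_congr rfl fun x hx => by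
        rw [filter_Ioc_prLayeredPerm_lt hx, Nat.card_Ioc_erase_of_le (mem_Ioc.1 hx).2 hbn]
    _ = (b - a) * (n - b) + (b - a - 1).choose 2 := by
        rw [sum_add_distrib, Nat.sum_Ioc_sub_sub_one, sum_const, Nat.card_Ioc, smul_eq_mul]
    _ = _ := by rw [c.getD_blocks, add_comm]

/-- For every composition `c = (c_1,…,c_m)` of `n` with parts in
`{1,…,k}`, the partially reversed layered permutation `τ_c` satisfies
`inv(τ_c) = Σ_{j=1}^m [ C(c_j - 1, 2) + c_j · (n - p_j) ]`. -/
theorem inv_prLayeredPerm (k n : ℕ) (c : Composition n) (hc : ∀ i ∈ c.blocks, i ≤ k) :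
    invStat n (prLayeredPerm c)
      = ∑ j ∈ Finset.range c.length,
          (Nat.choose (c.blocks.getD j 0 - 1) 2 +
            c.blocks.getD j 0 * (n - c.sizeUpTo (j + 1))) :=
  inv_prLayeredPerm_general n c
end

section
/- For all integers m ≥ 1 and n ≥ 1, F_{m+n} = F_m · F_n + Σ_{i=2}^{k} Σ_{j=1}^{i−1} z_i · q^{C(i,2)} · F_{m−j} · F_{n−i+j}, where C(i,2) = i(i−1)/2 and the double sum is restricted to those pairs (i,j) with j ≤ m and i−j ≤ n. -/
/-!
Splitting off the first block of a composition of `N + 1` gives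
`F (N + 1) = ∑_{a ≤ N} w (a + 1) F (N - a)`, where `w i = z i q^C(i,2)` for `i ≤ k`
and `w i = 0` otherwise. Any sequence with `F 0 = 1` satisfying this recurrence obeys
`F (m + n) = F m F n + ∑_{a < m, b < n} w (m + n - a - b) F a F b` (induction on `m`, for all
`n` at once): in a composition of `m + n` either a block ends at position `m`, or a single block
covers the positions `a + 1, …, m + n - b` across the cut. Indexing that block by its length `i`
and by the number `j` of its positions left of the cut turns the double sum into the stated one.
-/

/-- The generating polynomial of the inversion statistic over reverse layered
permutations of `{1,…,n}` with layers of length at most `k`: the sum over all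
compositions `c = (c_1,…,c_m)` of `n` with parts in `{1,…,k}` of
`∏_{j=1}^m z_{c_j} q^{C(c_j,2)}`. -/
def rinvGenPoly {R : Type*} [CommRing R] (k : ℕ) (q : R) (z : ℕ → R) (n : ℕ) : R :=
  ∑ c ∈ Finset.univ.filter (fun c : Composition n => ∀ i ∈ c.blocks, i ≤ k),
    ∏ j ∈ Finset.range c.length,
      z (c.blocks.getD j 0) * q ^ Nat.choose (c.blocks.getD j 0) 2

open Finset

section Recurrence

variable {R : Type*} [CommSemiring R] {w F : ℕ → R}

theorem add_eq_mul_add_sum_of_recurrence (hF0 : F 0 = 1)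
    (hF : ∀ N, F (N + 1) = ∑ a ∈ range (N + 1), w (a + 1) * F (N - a)) (m n : ℕ) :
    F (m + n) =
      F m * F n + ∑ a ∈ range m, ∑ b ∈ range n, w (m + n - a - b) * F a * F b := by
  have hlast : ∀ N, F (N + 1) = ∑ b ∈ range N, w (N + 1 - b) * F b + w 1 * F N := by
    intro N
    rw [hF, ← sum_range_reflect, sum_range_succ]
    congr 1
    · refine sum_congr rfl fun b hb => ?_
      rw [mem_range] at hb
      rw [show N + 1 - 1 - b + 1 = N + 1 - b by omega, show N - (N + 1 - 1 - b) = b by omega]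
    · simp
  induction m generalizing n with
  | zero => simp [hF0]
  | succ m ih =>
    have key := ih (n + 1)
    rw [show m + (n + 1) = m + 1 + n by ring] at key
    rw [key, hlast m, hlast n, sum_range_succ _ m]
    have e1 : ∀ a, m + 1 + n - a - n = m + 1 - a := by omega
    have e2 : ∀ b, m + 1 + n - m - b = n + 1 - b := by omega
    simp only [sum_range_succ _ n, e1, e2, sum_add_distrib, mul_add, add_mul, mul_sum,
      sum_mul]
    ring_nf

end Recurrence

theorem sum_range_range_eq_sum_Icc_Icc {M : Type*} [AddCommMonoid M]
    (g : ℕ → ℕ → ℕ → M) (k m n : ℕ) :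
    ∑ a ∈ range m, ∑ b ∈ range n,
        (if m + n - a - b ≤ k then g (m + n - a - b) a b else 0) =
      ∑ i ∈ Icc 2 k, ∑ j ∈ Icc 1 (i - 1),
        if j ≤ m ∧ i - j ≤ n then g i (m - j) (n + j - i) else 0 := by
  rw [← sum_product', sum_sigma', ← sum_filter, ← sum_filter]
  refine sum_nbij' (fun p => ⟨m + n - p.1 - p.2, m - p.1⟩) (fun p => (m - p.2, n + p.2 - p.1))
    ?_ ?_ ?_ ?_ ?_
  · rintro ⟨a, b⟩
    simp only [mem_filter, mem_product, mem_range, mem_sigma, mem_Icc]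
    omega
  · rintro ⟨i, j⟩
    simp only [mem_filter, mem_product, mem_range, mem_sigma, mem_Icc]
    omega
  · rintro ⟨a, b⟩ h
    simp only [mem_filter, mem_product, mem_range] at h
    ext <;> dsimp only <;> omega
  · rintro ⟨i, j⟩ h
    simp only [mem_filter, mem_sigma, mem_Icc] at h
    exact Sigma.ext (by dsimp only; omega) (heq_of_eq (by dsimp only; omega))
  · rintro ⟨a, b⟩ h
    simp only [mem_filter, mem_product, mem_range] at h
    dsimp only
    congr 1 <;> omega

theorem List.prod_map_ite_zero {M₀ α : Type*} [MonoidWithZero M₀] (p : α → Prop)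
    [DecidablePred p] (f : α → M₀) (l : List α) :
    (l.map fun a => if p a then f a else 0).prod =
      if ∀ a ∈ l, p a then (l.map f).prod else 0 := by
  induction l with
  | nil => simp
  | cons a l ih => by_cases ha : p a <;> simp [ha, ih]

theorem Finset.prod_range_getD {M α : Type*} [CommMonoid M] (f : α → M) (l : List α) (d : α) :
    ∏ j ∈ range l.length, f (l.getD j d) = (l.map f).prod := by
  induction l with
  | nil => simp
  | cons a l ih =>
    rw [List.length_cons, prod_range_succ', List.getD_cons_zero]
    simp only [List.getD_cons_succ, ih, List.map_cons, List.prod_cons, mul_comm]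

namespace Composition

@[simps]
def consBlock {n : ℕ} (p : Σ a : Fin (n + 1), Composition (n - a)) : Composition (n + 1) where
  blocks := (p.1 + 1 : ℕ) :: p.2.blocks
  blocks_pos := by simpa using fun _ => p.2.blocks_pos
  blocks_sum := by rw [List.sum_cons, p.2.blocks_sum]; omega

theorem consBlock_bijective (n : ℕ) : Function.Bijective (consBlock (n := n)) := by
  constructor
  · rintro ⟨a, d⟩ ⟨a', d'⟩ h
    simp only [Composition.ext_iff, consBlock_blocks, List.cons.injEq, add_left_inj] at h
    obtain rfl : a = a' := Fin.ext h.1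
    obtain rfl : d = d' := Composition.ext h.2
    rfl
  · intro c
    obtain ⟨b, t, hc⟩ :=
      List.exists_cons_of_ne_nil (c.blocks_eq_nil.not.2 (Nat.succ_ne_zero n))
    have hb : 0 < b := c.blocks_pos (hc ▸ List.mem_cons_self)
    have hsum : b + t.sum = n + 1 := by rw [← List.sum_cons, ← hc, c.blocks_sum]
    have ht : ∀ {i}, i ∈ t → 0 < i := fun hi ↦ c.blocks_pos (hc ▸ List.mem_cons_of_mem b hi)
    let d : Composition (n - (b - 1)) := ⟨t, ht, by omega⟩
    refine ⟨⟨⟨b - 1, by omega⟩, d⟩, Composition.ext ?_⟩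
    exact (congrArg (· :: t) (Nat.sub_add_cancel hb)).trans hc.symm

end Composition

def weightedCompositionSum {R : Type*} [CommSemiring R] (w : ℕ → R) (n : ℕ) : R :=
  ∑ c : Composition n, (c.blocks.map w).prod

section WeightedCompositionSum

variable {R : Type*} [CommSemiring R] (w : ℕ → R)

theorem weightedCompositionSum_zero : weightedCompositionSum w 0 = 1 := by
  have h (c : Composition 0) : c.blocks = [] := c.blocks_eq_nil.2 rfl
  simp [weightedCompositionSum, h, composition_card]

theorem weightedCompositionSum_succ (n : ℕ) :
    weightedCompositionSum w (n + 1) =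
      ∑ a ∈ range (n + 1), w (a + 1) * weightedCompositionSum w (n - a) := by
  rw [weightedCompositionSum, ← Fintype.sum_bijective _ (Composition.consBlock_bijective n)
    (fun p => w (p.1 + 1) * (p.2.blocks.map w).prod) _ (fun p => by simp),
    Fintype.sum_sigma, ← Fin.sum_univ_eq_sum_range]
  simp only [weightedCompositionSum, mul_sum]

end WeightedCompositionSum

theorem rinvGenPoly_eq_weightedCompositionSum {R : Type*} [CommRing R] (k : ℕ) (q : R)
    (z : ℕ → R) (n : ℕ) :
    rinvGenPoly k q z n =
      weightedCompositionSum (fun i => if i ≤ k then z i * q ^ i.choose 2 else 0) n := by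
  rw [rinvGenPoly, weightedCompositionSum, sum_filter]
  refine sum_congr rfl fun c _ => ?_
  rw [List.prod_map_ite_zero, ← c.blocks_length,
    prod_range_getD (fun i => z i * q ^ i.choose 2)]

theorem rinvGenPoly_addition_formula_general {R : Type*} [CommRing R] (k : ℕ)
    (q : R) (z : ℕ → R) (m n : ℕ) :
    rinvGenPoly k q z (m + n)
      = rinvGenPoly k q z m * rinvGenPoly k q z n +
        ∑ i ∈ Finset.Icc 2 k, ∑ j ∈ Finset.Icc 1 (i - 1),
          if j ≤ m ∧ i - j ≤ n then
            z i * q ^ Nat.choose i 2 * rinvGenPoly k q z (m - j) * rinvGenPoly k q z (n + j - i)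
          else 0 := by
  set w : ℕ → R := fun i => if i ≤ k then z i * q ^ i.choose 2 else 0
  have hF : rinvGenPoly k q z = weightedCompositionSum w :=
    funext (rinvGenPoly_eq_weightedCompositionSum k q z)
  rw [hF, add_eq_mul_add_sum_of_recurrence (weightedCompositionSum_zero w)
    (weightedCompositionSum_succ w), ← sum_range_range_eq_sum_Icc_Icc
    (fun i a b => z i * q ^ i.choose 2 * weightedCompositionSum w a * weightedCompositionSum w b)]
  simp only [w, ite_mul, zero_mul]

/-- For all integers `m ≥ 1` and `n ≥ 1`,
`F_{m+n} = F_m · F_n + Σ_{i=2}^{k} Σ_{j=1}^{i-1} z_i · q^{C(i,2)} · F_{m-j} · F_{n-i+j}`,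
the double sum being restricted to pairs `(i,j)` with `j ≤ m` and `i - j ≤ n`. -/
theorem rinvGenPoly_addition_formula {R : Type*} [CommRing R] (k : ℕ) (hk : 2 ≤ k)
    (q : R) (z : ℕ → R) (m n : ℕ) (hm : 1 ≤ m) (hn : 1 ≤ n) :
    rinvGenPoly k q z (m + n)
      = rinvGenPoly k q z m * rinvGenPoly k q z n +
        ∑ i ∈ Finset.Icc 2 k, ∑ j ∈ Finset.Icc 1 (i - 1),
          if j ≤ m ∧ i - j ≤ n then
            z i * q ^ Nat.choose i 2 * rinvGenPoly k q z (m - j) * rinvGenPoly k q z (n + j - i)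
          else 0 :=
  rinvGenPoly_addition_formula_general k q z m n
end

section
/- Let k ≥ 1 and n ≥ 1 be integers and let M be the k×k matrix over R with rows and columns indexed by 0,…,k−1 whose (i,j) entry is G(n+k−1+j−i, i), where for natural numbers N and a, G(N, a) = Σ_c ∏_{l=1}^m z_{c_l} · q^{a + p_{l−1}}, the sum being over all compositions c = (c_1,…,c_m) of N with parts in {1,…,k}. Then det M = ε · z_k^{n+k−1} · q^{C(n+k−1,2)}, where C(N,2) = N(N−1)/2, ε = 1 if k is odd, and ε = (−1)^{n−1} if k is even. -/
/-- The generating polynomial of the major index over layered permutations, shifted by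
a board of length `a` appended to the beginning:
`G(N,a) = Σ_c ∏_{l=1}^m z_{c_l} · q^{a + p_{l-1}}`, the sum over all compositions
`c = (c_1,…,c_m)` of `N` with parts in `{1,…,k}`, where `p_l` are the partial sums. -/
def majGenPoly {R : Type*} [CommRing R] (k : ℕ) (q : R) (z : ℕ → R) (N a : ℕ) : R :=
  ∑ c ∈ Finset.univ.filter (fun c : Composition N => ∀ i ∈ c.blocks, i ≤ k),
    ∏ l ∈ Finset.range c.length,
      z (c.blocks.getD l 0) * q ^ (a + c.sizeUpTo l)

/-!
Put `c = n + k - 1` and let `A m` be the `k × k` matrix with entries `G(c + j - m - i, m + i)`,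
where `G` is extended by zero to negative lengths. Then `A 0` is the matrix of the theorem and
`A c` is upper unitriangular. Splitting off the first layer gives
`G(N, a) = ∑_{t=1}^k z_t q^a G(N - t, a + t)` for `N > 0`, which says that
`A m = T m * A (m + 1)`, where `T m` has first row `(q^m z_1, …, q^m z_k)` and otherwise
shifts rows down by one. Expanding along the last column, `det (T m) = (-1)^(k-1) z_k q^m`,
and the product over `m < c` is `((-1)^(k-1) z_k)^c q^(C(c,2))`.
-/

open Finset

namespace Composition

def tail {n : ℕ} (c : Composition n) : Composition (n - c.blocks.headI) where
  blocks := c.blocks.tail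
  blocks_pos hi := c.blocks_pos (List.mem_of_mem_tail hi)
  blocks_sum := by
    have hsum := c.blocks_sum
    cases h : c.blocks with
    | nil => simp_all
    | cons b l => simp only [h, List.sum_cons] at hsum; simp; omega

def consOfLE {n t : ℕ} (ht : 0 < t) (htn : t ≤ n) (c : Composition (n - t)) :
    Composition n where
  blocks := t :: c.blocks
  blocks_pos hi := (List.mem_cons.1 hi).elim (fun h => h ▸ ht) c.blocks_pos
  blocks_sum := by rw [List.sum_cons, c.blocks_sum]; omega

theorem exists_blocks_eq_cons {n : ℕ} (hn : 0 < n) (c : Composition n) :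
    ∃ b l, c.blocks = b :: l :=
  List.exists_cons_of_ne_nil (by simpa using hn.ne')

theorem sum_blocks_zero {M : Type*} [AddCommMonoid M] (f : List ℕ → M) :
    ∑ c : Composition 0, f c.blocks = f [] := by
  rw [Fintype.sum_eq_single (ones 0) fun c hc => absurd (Composition.ext (by simp)) hc]
  simp

theorem sum_blocks_eq_sum_cons {M : Type*} [AddCommMonoid M] {n : ℕ} (hn : 0 < n)
    (f : List ℕ → M) :
    ∑ c : Composition n, f c.blocks =
      ∑ t ∈ Icc 1 n, ∑ c : Composition (n - t), f (t :: c.blocks) := by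
  rw [sum_sigma']
  refine sum_bij' (fun c _ => ⟨c.blocks.headI, c.tail⟩)
    (fun x hx => have ht := mem_Icc.1 (mem_sigma.1 hx).1; consOfLE ht.1 ht.2 x.2)
    (fun c _ => ?_) (fun _ _ => mem_univ _) (fun c _ => ?_) (fun _ _ => rfl) (fun c _ => ?_)
  all_goals obtain ⟨b, l, hc⟩ := c.exists_blocks_eq_cons hn
  · have hb : 1 ≤ b := c.blocks_pos (by simp [hc])
    have hbn : b ≤ n := c.blocks_sum ▸ List.le_sum_of_mem (by simp [hc])
    simp [hc, hb, hbn]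
  · exact Composition.ext (by simp [consOfLE, tail, hc])
  · simp [tail, hc]

end Composition

section LayerWeight

variable {M : Type*} [CommMonoid M]

def layerWeight (q : M) (z : ℕ → M) : ℕ → List ℕ → M
  | _, [] => 1
  | a, b :: l => z b * q ^ a * layerWeight q z (a + b) l

theorem prod_range_length_eq_layerWeight (q : M) (z : ℕ → M) (a : ℕ) (l : List ℕ) :
    ∏ i ∈ range l.length, z (l.getD i 0) * q ^ (a + (l.take i).sum) = layerWeight q z a l := by
  induction l generalizing a with
  | nil => simp [layerWeight]
  | cons b l ih =>
    rw [List.length_cons, prod_range_succ', layerWeight, ← ih, mul_comm]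
    simp [add_assoc]

end LayerWeight

section MajGenPoly

variable {R : Type*} [CommRing R] (k : ℕ) (q : R) (z : ℕ → R)

theorem majGenPoly_eq_sum_layerWeight (N a : ℕ) :
    majGenPoly k q z N a = ∑ c : Composition N,
      if ∀ i ∈ c.blocks, i ≤ k then layerWeight q z a c.blocks else 0 := by
  simp only [majGenPoly, sum_filter, Composition.length, Composition.sizeUpTo,
    prod_range_length_eq_layerWeight]

theorem majGenPoly_zero (a : ℕ) : majGenPoly k q z 0 a = 1 := by
  rw [majGenPoly_eq_sum_layerWeight,
    Composition.sum_blocks_zero fun l => if ∀ i ∈ l, i ≤ k then layerWeight q z a l else 0]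
  simp [layerWeight]

theorem majGenPoly_eq_sum_first_layer {N : ℕ} (hN : 0 < N) (a : ℕ) :
    majGenPoly k q z N a = ∑ t ∈ Icc 1 N,
      if t ≤ k then z t * q ^ a * majGenPoly k q z (N - t) (a + t) else 0 := by
  rw [majGenPoly_eq_sum_layerWeight, Composition.sum_blocks_eq_sum_cons hN
    fun l => if ∀ i ∈ l, i ≤ k then layerWeight q z a l else 0]
  refine sum_congr rfl fun t _ => ?_
  split_ifs with htk
  · simp [majGenPoly_eq_sum_layerWeight, layerWeight, htk, mul_sum, apply_ite]
  · simp [htk]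

def majGenPolyInt (N : ℤ) (a : ℕ) : R :=
  if 0 ≤ N then majGenPoly k q z N.toNat a else 0

@[simp]
theorem majGenPolyInt_natCast (N a : ℕ) : majGenPolyInt k q z N a = majGenPoly k q z N a := by
  simp [majGenPolyInt]

theorem majGenPolyInt_of_neg {N : ℤ} (hN : N < 0) (a : ℕ) : majGenPolyInt k q z N a = 0 :=
  if_neg hN.not_ge

theorem majGenPolyInt_eq_sum_first_layer {N : ℤ} (hN : 0 < N) (a : ℕ) :
    majGenPolyInt k q z N a =
      ∑ t ∈ Icc 1 k, z t * q ^ a * majGenPolyInt k q z (N - t) (a + t) := by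
  lift N to ℕ using hN.le
  calc majGenPolyInt k q z N a
      = ∑ t ∈ (Icc 1 k).filter (· ≤ N), z t * q ^ a * majGenPoly k q z (N - t) (a + t) := by
        rw [majGenPolyInt_natCast, majGenPoly_eq_sum_first_layer k q z (by omega), ← sum_filter]
        congr 1
        ext
        simp only [mem_filter, mem_Icc]
        omega
    _ = ∑ t ∈ (Icc 1 k).filter (· ≤ N), z t * q ^ a * majGenPolyInt k q z (N - t) (a + t) :=
        sum_congr rfl fun t ht => by
          rw [← Nat.cast_sub (mem_filter.1 ht).2, majGenPolyInt_natCast]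
    _ = _ := sum_filter_of_ne fun t _ hne => by
        by_contra htN
        rw [majGenPolyInt_of_neg k q z (by omega), mul_zero] at hne
        exact hne rfl

end MajGenPoly

namespace Matrix

variable {R : Type*} [CommRing R] {n : ℕ}

def consShift (v : Fin (n + 1) → R) : Matrix (Fin (n + 1)) (Fin (n + 1)) R :=
  of (Fin.cons v fun s => Pi.single s.castSucc 1)

@[simp]
theorem consShift_mul_apply_zero (v : Fin (n + 1) → R) (B : Matrix (Fin (n + 1)) (Fin (n + 1)) R)
    (j : Fin (n + 1)) : (consShift v * B) 0 j = ∑ u, v u * B u j := by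
  simp [consShift, mul_apply]

@[simp]
theorem consShift_mul_apply_succ (v : Fin (n + 1) → R) (B : Matrix (Fin (n + 1)) (Fin (n + 1)) R)
    (s : Fin n) (j : Fin (n + 1)) : (consShift v * B) s.succ j = B s.castSucc j := by
  simp [consShift, mul_apply, Pi.single_apply]

theorem det_consShift (v : Fin (n + 1) → R) : (consShift v).det = (-1) ^ n * v (Fin.last n) := by
  have hminor : (consShift v).submatrix Fin.succ Fin.castSucc = 1 := by
    ext s u
    simp [consShift, one_apply, Pi.single_apply, eq_comm]
  rw [det_succ_column _ (Fin.last n), Fintype.sum_eq_single 0 fun i hi => ?_]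
  · rw [Fin.succAbove_zero, Fin.succAbove_last, hminor, det_one]
    simp [consShift]
  · obtain ⟨s, rfl⟩ := Fin.exists_succ_eq.2 hi
    simp [consShift, Fin.castSucc_ne_last]

end Matrix

theorem eq_prod_range_mul_of_eq_mul_succ {M : Type*} [CommMonoid M] (f g : ℕ → M) (c : ℕ)
    (h : ∀ m < c, f m = g m * f (m + 1)) : f 0 = (∏ m ∈ range c, g m) * f c := by
  induction c generalizing f g with
  | zero => simp
  | succ c ih =>
    rw [h 0 (by omega), prod_range_succ', mul_comm _ (g 0), mul_assoc]
    exact congrArg (g 0 * ·)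
      (ih (fun m => f (m + 1)) (fun m => g (m + 1)) fun m hm => h (m + 1) (by omega))

section MajGenMatrix

variable {R : Type*} [CommRing R] (k : ℕ) (q : R) (z : ℕ → R) (c : ℕ)

def majGenMatrix (m : ℕ) : Matrix (Fin k) (Fin k) R :=
  Matrix.of fun i j => majGenPolyInt k q z (c + j - m - i) (m + i)

theorem det_majGenMatrix_self : (majGenMatrix k q z c c).det = 1 := by
  rw [Matrix.det_of_isUpperTriangular (M := majGenMatrix k q z c c) fun i j (hji : j < i) =>
    majGenPolyInt_of_neg k q z (by omega) _]
  simp [majGenMatrix, majGenPolyInt, majGenPoly_zero]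

theorem majGenMatrix_eq_mul (k' : ℕ) {m : ℕ} (hm : m < c) :
    majGenMatrix (k' + 1) q z c m =
      Matrix.consShift (fun u => q ^ m * z (u + 1)) * majGenMatrix (k' + 1) q z c (m + 1) := by
  ext i j
  induction i using Fin.cases with
  | zero =>
    simp only [Matrix.consShift_mul_apply_zero, majGenMatrix, Matrix.of_apply, Fin.val_zero]
    rw [majGenPolyInt_eq_sum_first_layer _ _ _ (by omega), ← Ico_add_one_right_eq_Icc,
      sum_Ico_eq_sum_range, add_tsub_cancel_right, ← Fin.sum_univ_eq_sum_range]
    refine sum_congr rfl fun u _ => ?_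
    rw [add_zero, mul_comm (z _), add_comm 1]
    congr 2 <;> push_cast <;> ring
  | succ s =>
    simp only [Matrix.consShift_mul_apply_succ, majGenMatrix, Matrix.of_apply]
    rw [Fin.val_succ, Fin.val_castSucc]
    congr 1 <;> push_cast <;> ring

theorem det_majGenMatrix_succ (k' : ℕ) {m : ℕ} (hm : m < c) :
    (majGenMatrix (k' + 1) q z c m).det =
      (-1) ^ k' * z (k' + 1) * q ^ m * (majGenMatrix (k' + 1) q z c (m + 1)).det := by
  rw [majGenMatrix_eq_mul q z c k' hm, Matrix.det_mul, Matrix.det_consShift]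
  simp only [Fin.val_last]
  ring

theorem det_majGenMatrix_zero (k' : ℕ) :
    (majGenMatrix (k' + 1) q z c 0).det = ((-1) ^ k' * z (k' + 1)) ^ c * q ^ c.choose 2 := by
  rw [eq_prod_range_mul_of_eq_mul_succ (fun m => (majGenMatrix (k' + 1) q z c m).det) _ c
      fun m hm => det_majGenMatrix_succ q z c k' hm,
    det_majGenMatrix_self, mul_one, prod_mul_distrib, prod_const, card_range,
    prod_pow_eq_pow_sum, sum_range_id, Nat.choose_two_right]

end MajGenMatrix

/-- Let `k ≥ 1` and `n ≥ 1` and let `M` be the `k × k` matrix over `R`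
whose `(i,j)` entry is `G(n+k-1+j-i, i)`. Then
`det M = ε · z_k^{n+k-1} · q^{C(n+k-1,2)}`, where `ε = 1` if `k` is odd and
`ε = (-1)^{n-1}` if `k` is even. -/
theorem majGenPoly_toeplitz_determinant {R : Type*} [CommRing R] (k : ℕ) (hk : 1 ≤ k)
    (q : R) (z : ℕ → R) (n : ℕ) (hn : 1 ≤ n) :
    Matrix.det (Matrix.of fun i j : Fin k =>
        majGenPoly k q z (n + k - 1 + (j : ℕ) - (i : ℕ)) (i : ℕ))
      = (if Odd k then 1 else (-1) ^ (n - 1)) *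
          z k ^ (n + k - 1) * q ^ Nat.choose (n + k - 1) 2 := by
  obtain ⟨k', rfl⟩ : ∃ k', k = k' + 1 := ⟨k - 1, by omega⟩
  have hM : Matrix.of (fun i j : Fin (k' + 1) =>
      majGenPoly (k' + 1) q z (n + (k' + 1) - 1 + j - i) i) =
        majGenMatrix (k' + 1) q z (n + k') 0 := by
    ext i j
    rw [majGenMatrix, Matrix.of_apply, Matrix.of_apply, ← majGenPolyInt_natCast]
    congr 1 <;> omega
  have hsign : ((-1 : R) ^ k') ^ (n + k') = if Odd (k' + 1) then 1 else (-1) ^ (n - 1) := by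
    rcases Nat.even_or_odd k' with hk' | hk'
    · simp [hk'.neg_one_pow, Even.add_one hk']
    · rw [hk'.neg_one_pow, if_neg (Nat.not_odd_iff_even.2 hk'.add_one)]
      obtain ⟨a, rfl⟩ := hk'
      rw [show n + (2 * a + 1) = n - 1 + 2 * (a + 1) by omega, pow_add, pow_mul]
      simp
  rw [hM, det_majGenMatrix_zero, mul_pow, hsign, ← add_assoc, Nat.add_sub_cancel]
end
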